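/- arXiv:1506.07633 — 2 statements merged into one kernel-verified Lean document; each statement's English description precedes it below -/
import Mathlib

section
/- Let A_1, ..., A_k be Hermitian operators on a finite-dimensional Hilbert space that are all nondecreasing functions of one fixed Hermitian operator A (i.e., A_i = f_i(A) with each f_i : ℝ → ℝ nondecreasing). If B_1, ..., B_k are Hermitian operators with A_i majorizing B_i for each i (the ordered eigenvalue sequence of A_i majorizes that of B_i), then A_1 + ... + A_k majorizes B_1 + ... + B_k. -/
/-!
Ky Fan's principle: the sum of the `q` largest eigenvalues of a Hermitian `X` is the maximum of
`Re tr (Vᴴ X V)` over isometries `V` with `q` columns. It makes this sum subadditive, so the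
partial sums of `∑ i, B i` are at most `∑ i` of those of `B i`, hence of those of `f i (A)`.
Because every `f i` is nondecreasing, one ordering of the eigenbasis of `A` sorts the
eigenvalues of all `f i (A)` simultaneously, so their partial sums add up to those of
`∑ i, f i (A)`.
-/

open Matrix

/-- The sum of the `q` largest values of the finite family `μ` (sorted decreasingly). -/
noncomputable def psum {n : ℕ} (μ : Fin n → ℝ) (q : ℕ) : ℝ :=
  ∑ j ∈ Finset.univ.filter (fun j : Fin n => (j : ℕ) < q),
    μ (Tuple.sort (fun i => -μ i) j)

/-- The sum of the `q` largest eigenvalues of a Hermitian matrix (junk value `0` if the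
matrix is not Hermitian). -/
noncomputable def eigPsum {n : ℕ} (X : Matrix (Fin n) (Fin n) ℂ) (q : ℕ) : ℝ :=
  if hX : X.IsHermitian then psum hX.eigenvalues q else 0

/-- `X` majorizes `Y`: the partial sums of the decreasingly ordered eigenvalues of `X`
dominate those of `Y`, and the traces are equal. -/
def Maj {n : ℕ} (X Y : Matrix (Fin n) (Fin n) ℂ) : Prop :=
  (∀ q : ℕ, eigPsum Y q ≤ eigPsum X q) ∧ X.trace = Y.trace

open Finset

theorem sum_mul_le_sum_of_threshold {ι : Type*} [Fintype ι] (μ s : ι → ℝ) (F : Finset ι)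
    (c : ℝ) (hF : ∀ i ∈ F, c ≤ μ i) (hFc : ∀ i ∉ F, μ i ≤ c)
    (hs0 : ∀ i, 0 ≤ s i) (hs1 : ∀ i, s i ≤ 1) (hs : ∑ i, s i = #F) :
    ∑ i, μ i * s i ≤ ∑ i ∈ F, μ i := by
  classical
  -- `∑ i ∈ F, μ i - ∑ i, μ i * s i` is the sum of these two, since `∑ i, s i = #F`
  have hgain : 0 ≤ ∑ i ∈ F, (μ i - c) * (1 - s i) :=
    sum_nonneg fun i hi => mul_nonneg (sub_nonneg.2 (hF i hi)) (sub_nonneg.2 (hs1 i))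
  have hloss : 0 ≤ ∑ i ∈ Fᶜ, (c - μ i) * s i :=
    sum_nonneg fun i hi => mul_nonneg (sub_nonneg.2 (hFc i (mem_compl.1 hi))) (hs0 i)
  rw [← sum_add_sum_compl F s] at hs
  rw [← sum_add_sum_compl F]
  simp only [sub_mul, mul_sub, mul_one, sum_sub_distrib, ← mul_sum, sum_const, nsmul_eq_mul]
    at hgain hloss
  linear_combination hgain + hloss + c * hs

theorem antitone_comp_sort {n : ℕ} (μ : Fin n → ℝ) :
    Antitone (μ ∘ Tuple.sort (fun i => -μ i)) :=
  fun _ _ hab => neg_le_neg_iff.1 (Tuple.monotone_sort (fun i => -μ i) hab)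

theorem psum_eq_sum_of_antitone {n : ℕ} {μ : Fin n → ℝ} {σ : Equiv.Perm (Fin n)}
    (h : Antitone (μ ∘ σ)) (q : ℕ) :
    psum μ q = ∑ j ∈ univ.filter (fun j : Fin n => (j : ℕ) < q), μ (σ j) := by
  have hsort : (fun i => -μ i) ∘ σ = (fun i => -μ i) ∘ Tuple.sort (fun i => -μ i) :=
    Tuple.comp_sort_eq_comp_iff_monotone.2 fun _ _ hab => neg_le_neg (h hab)
  refine sum_congr rfl fun j _ => ?_
  simpa using (congrFun hsort j).symm

theorem psum_sum_of_monotone {n : ℕ} {ι : Type*} (s : Finset ι) {f : ι → ℝ → ℝ}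
    (hf : ∀ i, Monotone (f i)) (lam : Fin n → ℝ) (q : ℕ) :
    psum (fun j => ∑ i ∈ s, f i (lam j)) q = ∑ i ∈ s, psum (fun j => f i (lam j)) q := by
  have hlam := antitone_comp_sort lam
  rw [psum_eq_sum_of_antitone (μ := fun j => ∑ i ∈ s, f i (lam j))
    (fun a b hab => sum_le_sum fun i _ => hf i (hlam hab)), sum_comm]
  exact sum_congr rfl fun i _ =>
    (psum_eq_sum_of_antitone (μ := fun j => f i (lam j)) (fun a b hab => hf i (hlam hab)) q).symm

theorem sum_mul_le_psum {n : ℕ} (d t : Fin n → ℝ) (q : ℕ) (ht0 : ∀ j, 0 ≤ t j)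
    (ht1 : ∀ j, t j ≤ 1) (ht : ∑ j, t j = #(univ.filter fun j : Fin n => (j : ℕ) < q)) :
    ∑ j, d j * t j ≤ psum d q := by
  set σ := Tuple.sort (fun i => -d i)
  have hd : Antitone (d ∘ σ) := antitone_comp_sort d
  obtain ⟨c, hc_lt, hc_ge⟩ : ∃ c, (∀ j : Fin n, (j : ℕ) < q → c ≤ d (σ j)) ∧
      ∀ j : Fin n, q ≤ (j : ℕ) → d (σ j) ≤ c := by
    rcases lt_or_ge q n with hq | hq
    · exact ⟨d (σ ⟨q, hq⟩), fun j hj => hd (Fin.le_def.2 hj.le),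
        fun j hj => hd (Fin.le_def.2 hj)⟩
    · exact ⟨⨅ j, d j, fun j _ => ciInf_le (Set.finite_range d).bddBelow _,
        fun j hj => absurd j.isLt (by omega)⟩
  rw [← Equiv.sum_comp σ] at ht
  rw [← Equiv.sum_comp σ, psum_eq_sum_of_antitone hd]
  exact sum_mul_le_sum_of_threshold (d ∘ σ) (t ∘ σ) _ c
    (fun j hj => hc_lt j (by simpa using hj)) (fun j hj => hc_ge j (by simpa using hj))
    (fun _ => ht0 _) (fun _ => ht1 _) ht

theorem diagonal_finset_sum {ι m α : Type*} [DecidableEq m] [AddCommMonoid α] (s : Finset ι)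
    (d : ι → m → α) : diagonal (∑ i ∈ s, d i) = ∑ i ∈ s, diagonal (d i) :=
  map_sum (diagonalAddMonoidHom m α) d s

open scoped ComplexOrder

theorem posSemidef_one_sub_mul_conjTranspose {m p R : Type*} [Fintype m] [Fintype p]
    [DecidableEq m] [DecidableEq p] [CommRing R] [PartialOrder R] [StarRing R]
    [StarOrderedRing R] {W : Matrix m p R} (hW : Wᴴ * W = 1) : (1 - W * Wᴴ).PosSemidef := by
  have hidem : W * Wᴴ * (W * Wᴴ) = W * Wᴴ := by
    rw [Matrix.mul_assoc, ← Matrix.mul_assoc Wᴴ, hW, Matrix.one_mul]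
  have hproj : (1 - W * Wᴴ)ᴴ * (1 - W * Wᴴ) = 1 - W * Wᴴ := by
    rw [conjTranspose_sub, conjTranspose_one, conjTranspose_mul, conjTranspose_conjTranspose,
      Matrix.sub_mul, Matrix.mul_sub, Matrix.mul_sub, hidem]
    simp
  exact hproj ▸ posSemidef_conjTranspose_mul_self _

theorem trace_conjTranspose_mul_diagonal_mul {m p R : Type*} [Fintype m] [Fintype p]
    [DecidableEq m] [CommSemiring R] [StarRing R] (W : Matrix m p R) (d : m → R) :
    (Wᴴ * diagonal d * W).trace = ∑ j, d j * (W * Wᴴ) j j := by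
  rw [trace_mul_cycle, trace]
  simp [mul_diagonal, mul_comm]

theorem re_trace_conjTranspose_mul_diagonal_mul_le_psum {n : ℕ} {p : Type*} [Fintype p]
    [DecidableEq p] (d : Fin n → ℝ) {q : ℕ} (W : Matrix (Fin n) p ℂ) (hW : Wᴴ * W = 1)
    (hp : Fintype.card p = #(univ.filter fun j : Fin n => (j : ℕ) < q)) :
    (Wᴴ * diagonal (fun j => (d j : ℂ)) * W).trace.re ≤ psum d q := by
  rw [trace_conjTranspose_mul_diagonal_mul, Complex.re_sum]
  simp only [Complex.re_ofReal_mul]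
  refine sum_mul_le_psum d _ q (fun j => ?_) (fun j => ?_) ?_
  · exact (Complex.nonneg_iff.1 (posSemidef_self_mul_conjTranspose W).diag_nonneg).1
  · simpa using (Complex.nonneg_iff.1 (posSemidef_one_sub_mul_conjTranspose hW).diag_nonneg).1
  · calc ∑ j, ((W * Wᴴ) j j).re = (W * Wᴴ).trace.re := by simp [trace]
      _ = _ := by rw [trace_mul_comm, hW, trace_one, hp]; simp

section KyFan

variable {n : ℕ} {U : Matrix (Fin n) (Fin n) ℂ}

theorem re_trace_conj_le_psum (hU : U ∈ unitaryGroup (Fin n) ℂ) (d : Fin n → ℝ) {q : ℕ}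
    {p : Type*} [Fintype p] [DecidableEq p] (V : Matrix (Fin n) p ℂ) (hV : Vᴴ * V = 1)
    (hp : Fintype.card p = #(univ.filter fun j : Fin n => (j : ℕ) < q)) :
    (Vᴴ * (U * diagonal (fun j => (d j : ℂ)) * star U) * V).trace.re ≤ psum d q := by
  have hUV : (Uᴴ * V)ᴴ * (Uᴴ * V) = 1 := by
    rw [conjTranspose_mul, conjTranspose_conjTranspose, Matrix.mul_assoc, ← Matrix.mul_assoc U,
      ← star_eq_conjTranspose, mem_unitaryGroup_iff.1 hU, Matrix.one_mul, hV]
  convert re_trace_conjTranspose_mul_diagonal_mul_le_psum d _ hUV hp using 3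
  simp only [conjTranspose_mul, conjTranspose_conjTranspose, star_eq_conjTranspose,
    Matrix.mul_assoc]

theorem exists_re_trace_conj_eq_psum (hU : U ∈ unitaryGroup (Fin n) ℂ) (d : Fin n → ℝ)
    (q : ℕ) : ∃ V : Matrix (Fin n) {j : Fin n // (j : ℕ) < q} ℂ, Vᴴ * V = 1 ∧
      (Vᴴ * (U * diagonal (fun j => (d j : ℂ)) * star U) * V).trace.re = psum d q := by
  -- `V` picks the eigenvectors `U` attaches to the `q` largest entries of `d`
  set e : {j : Fin n // (j : ℕ) < q} → Fin n := Tuple.sort (fun i => -d i) ∘ Subtype.val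
  have he : Function.Injective e := (Equiv.injective _).comp Subtype.val_injective
  have hconj : ∀ X : Matrix (Fin n) (Fin n) ℂ,
      (U.submatrix id e)ᴴ * X * U.submatrix id e = (star U * X * U).submatrix e e := by
    intro X
    rw [conjTranspose_submatrix, ← star_eq_conjTranspose, ← submatrix_id_id X,
      ← submatrix_mul _ _ _ _ _ Function.bijective_id,
      ← submatrix_mul _ _ _ _ _ Function.bijective_id, submatrix_id_id]
  have hUU : star U * U = 1 := mem_unitaryGroup_iff'.1 hU
  refine ⟨U.submatrix id e, ?_, ?_⟩
  · simpa [hUU, submatrix_one _ he] using hconj 1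
  · rw [hconj, Matrix.mul_assoc, Matrix.mul_assoc, hUU, Matrix.mul_one, ← Matrix.mul_assoc, hUU,
      Matrix.one_mul, submatrix_diagonal _ _ he, trace_diagonal, Complex.re_sum, psum,
      sum_subtype (p := fun j : Fin n => (j : ℕ) < q) (F := inferInstance) _ (by simp)]
    simp [e]

end KyFan

section eigPsum

variable {n : ℕ}

theorem isHermitian_conj_diagonal (U : Matrix (Fin n) (Fin n) ℂ) (d : Fin n → ℝ) :
    (U * diagonal (fun j => (d j : ℂ)) * star U).IsHermitian :=
  isHermitian_mul_mul_conjTranspose U (isHermitian_diagonal_iff.2 fun _ => Complex.conj_ofReal _)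

theorem psum_le_psum_of_conj_diagonal_eq {U U' : Matrix (Fin n) (Fin n) ℂ}
    (hU : U ∈ unitaryGroup (Fin n) ℂ) (hU' : U' ∈ unitaryGroup (Fin n) ℂ)
    {d d' : Fin n → ℝ} (h : U * diagonal (fun j => (d j : ℂ)) * star U =
      U' * diagonal (fun j => (d' j : ℂ)) * star U') (q : ℕ) :
    psum d q ≤ psum d' q := by
  obtain ⟨V, hV, hVd⟩ := exists_re_trace_conj_eq_psum hU d q
  rw [← hVd, h]
  exact re_trace_conj_le_psum hU' d' V hV (Fintype.card_subtype _)

theorem eigPsum_conj_diagonal {U : Matrix (Fin n) (Fin n) ℂ} (hU : U ∈ unitaryGroup (Fin n) ℂ)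
    (d : Fin n → ℝ) (q : ℕ) :
    eigPsum (U * diagonal (fun j => (d j : ℂ)) * star U) q = psum d q := by
  have hX := isHermitian_conj_diagonal U d
  rw [eigPsum, dif_pos hX]
  have hspec := hX.spectral_theorem
  rw [Unitary.conjStarAlgAut_apply] at hspec
  exact le_antisymm (psum_le_psum_of_conj_diagonal_eq (SetLike.coe_mem _) hU hspec.symm q)
    (psum_le_psum_of_conj_diagonal_eq hU (SetLike.coe_mem _) hspec q)

theorem re_trace_le_eigPsum {X : Matrix (Fin n) (Fin n) ℂ} (hX : X.IsHermitian) {q : ℕ}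
    (V : Matrix (Fin n) {j : Fin n // (j : ℕ) < q} ℂ) (hV : Vᴴ * V = 1) :
    (Vᴴ * X * V).trace.re ≤ eigPsum X q := by
  rw [eigPsum, dif_pos hX]
  conv_lhs => rw [hX.spectral_theorem, Unitary.conjStarAlgAut_apply]
  exact re_trace_conj_le_psum (SetLike.coe_mem _) _ V hV (Fintype.card_subtype _)

theorem exists_re_trace_eq_eigPsum {X : Matrix (Fin n) (Fin n) ℂ} (hX : X.IsHermitian) (q : ℕ) :
    ∃ V : Matrix (Fin n) {j : Fin n // (j : ℕ) < q} ℂ, Vᴴ * V = 1 ∧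
      (Vᴴ * X * V).trace.re = eigPsum X q := by
  rw [eigPsum, dif_pos hX]
  obtain ⟨V, hV, hVX⟩ := exists_re_trace_conj_eq_psum (SetLike.coe_mem _) hX.eigenvalues q
  refine ⟨V, hV, ?_⟩
  convert hVX using 5
  exact hX.spectral_theorem

theorem eigPsum_add_le {X Y : Matrix (Fin n) (Fin n) ℂ} (hX : X.IsHermitian)
    (hY : Y.IsHermitian) (q : ℕ) : eigPsum (X + Y) q ≤ eigPsum X q + eigPsum Y q := by
  obtain ⟨V, hV, hVXY⟩ := exists_re_trace_eq_eigPsum (hX.add hY) q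
  rw [← hVXY, Matrix.mul_add, Matrix.add_mul, trace_add, Complex.add_re]
  exact add_le_add (re_trace_le_eigPsum hX V hV) (re_trace_le_eigPsum hY V hV)

theorem eigPsum_zero (q : ℕ) : eigPsum (0 : Matrix (Fin n) (Fin n) ℂ) q = 0 := by
  simpa [psum] using eigPsum_conj_diagonal (one_mem _) 0 q

theorem eigPsum_sum_le {ι : Type*} (s : Finset ι) {B : ι → Matrix (Fin n) (Fin n) ℂ}
    (hB : ∀ i ∈ s, (B i).IsHermitian) (q : ℕ) :
    eigPsum (∑ i ∈ s, B i) q ≤ ∑ i ∈ s, eigPsum (B i) q :=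
  le_sum_of_subadditive_on_pred (eigPsum · q) IsHermitian (eigPsum_zero q).le
    (fun _ _ hX hY => eigPsum_add_le hX hY q) (fun _ _ => IsHermitian.add) B hB

end eigPsum

/-- if `A₁, …, A_k` are Hermitian matrices which are all nondecreasing
functions `A i = f i (A)` of one fixed Hermitian matrix `A` (functional calculus in a
common eigenbasis of `A`), and `B₁, …, B_k` are Hermitian matrices with `A i` majorizing
`B i` for each `i`, then `∑ i, A i` majorizes `∑ i, B i`. -/
theorem maj_sum_of_simultaneously_ordered {n k : ℕ}
    (A : Matrix (Fin n) (Fin n) ℂ) (hA : A.IsHermitian)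
    (f : Fin k → ℝ → ℝ) (hf : ∀ i, Monotone (f i))
    (B : Fin k → Matrix (Fin n) (Fin n) ℂ) (hB : ∀ i, (B i).IsHermitian)
    (hmaj : ∀ i : Fin k,
      Maj ((hA.eigenvectorUnitary : Matrix (Fin n) (Fin n) ℂ) *
            Matrix.diagonal (fun j => ((f i (hA.eigenvalues j) : ℝ) : ℂ)) *
            star (hA.eigenvectorUnitary : Matrix (Fin n) (Fin n) ℂ))
          (B i)) :
    Maj (∑ i : Fin k,
          (hA.eigenvectorUnitary : Matrix (Fin n) (Fin n) ℂ) *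
            Matrix.diagonal (fun j => ((f i (hA.eigenvalues j) : ℝ) : ℂ)) *
            star (hA.eigenvectorUnitary : Matrix (Fin n) (Fin n) ℂ))
        (∑ i : Fin k, B i) := by
  set U : Matrix (Fin n) (Fin n) ℂ := (hA.eigenvectorUnitary : Matrix (Fin n) (Fin n) ℂ)
  have hU : U ∈ unitaryGroup (Fin n) ℂ := hA.eigenvectorUnitary.2
  have hsum : ∑ i, U * diagonal (fun j => (f i (hA.eigenvalues j) : ℂ)) * star U =
      U * diagonal (fun j => ((∑ i, f i (hA.eigenvalues j) : ℝ) : ℂ)) * star U := by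
    rw [← sum_mul, ← mul_sum]
    congr 2
    rw [← diagonal_finset_sum]
    congr 1 with j
    simp
  refine ⟨fun q => ?_, by simp only [trace_sum, (hmaj _).2]⟩
  rw [hsum, eigPsum_conj_diagonal hU, psum_sum_of_monotone _ hf]
  calc eigPsum (∑ i, B i) q ≤ ∑ i, eigPsum (B i) q := eigPsum_sum_le _ (fun i _ => hB i) q
    _ ≤ ∑ i, eigPsum (U * diagonal (fun j => (f i (hA.eigenvalues j) : ℂ)) * star U) q :=
      sum_le_sum fun i _ => (hmaj i).1 q
    _ = _ := by simp only [eigPsum_conj_diagonal hU]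
end

section
/- Define the map T^k from operators on H_M to operators on H_{M+k} by T^k(Γ) = (M+k)!/M! · P_{M+k}((⊗^k I_{ℂ^N}) ⊗ Γ)P_{M+k}. Then Tr_{H_{M+k}} T^k(Γ) = [(M+k+N−1)!/(M+N−1)!] · Tr_{H_M} Γ. -/
open Matrix

/-- The matrix of the permutation `σ` acting on `⊗^M ℂ^N`, realized concretely on
`(Fin M → Fin N) → ℂ` (tensors written in the standard product basis). -/
def permMat (M N : ℕ) (σ : Equiv.Perm (Fin M)) :
    Matrix (Fin M → Fin N) (Fin M → Fin N) ℂ :=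
  Matrix.of fun i j => if i ∘ σ = j then (1 : ℂ) else 0

/-- The symmetrization projection `P_M = (1/M!) ∑_σ σ` on `⊗^M ℂ^N`. -/
noncomputable def symProj (M N : ℕ) : Matrix (Fin M → Fin N) (Fin M → Fin N) ℂ :=
  ((M.factorial : ℂ))⁻¹ • ∑ σ : Equiv.Perm (Fin M), permMat M N σ

/-- The operator `(⊗^k I_{ℂ^N}) ⊗ Γ` on `⊗^{k+M} ℂ^N`, for an operator `Γ` on
`⊗^M ℂ^N` (the first `k` tensor factors carry the identity). -/
def extendOp (N M k : ℕ) (Γ : Matrix (Fin M → Fin N) (Fin M → Fin N) ℂ) :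
    Matrix (Fin (k + M) → Fin N) (Fin (k + M) → Fin N) ℂ :=
  Matrix.of fun i j =>
    (if (fun a : Fin k => i (Fin.castAdd M a)) = (fun a : Fin k => j (Fin.castAdd M a))
      then (1 : ℂ) else 0) *
    Γ (fun b : Fin M => i (Fin.natAdd k b)) (fun b : Fin M => j (Fin.natAdd k b))

/-- The map `T^k(Γ) = ((M+k)!/M!) P_{M+k} ((⊗^k I) ⊗ Γ) P_{M+k}` from operators on the
symmetric subspace `H_M` to operators on `H_{M+k}` (the universal cloning map, up to
normalization). -/
noncomputable def Tk (N M k : ℕ) (Γ : Matrix (Fin M → Fin N) (Fin M → Fin N) ℂ) :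
    Matrix (Fin (k + M) → Fin N) (Fin (k + M) → Fin N) ℂ :=
  (((M + k).factorial : ℂ) / (M.factorial : ℂ)) •
    (symProj (k + M) N * extendOp N M k Γ * symProj (k + M) N)

/-!
Write `S_n` for the symmetrizer on `n` tensor factors. Cyclicity of the trace and `S_n² = S_n`
give `Tr T^k(Γ) = (M+k)!/M! · Tr (S_{k+M} ((⊗^k I) ⊗ Γ))`, so everything rests on peeling off
one identity factor: for any `X` on `n` factors, `(n+1) Tr (S_{n+1} (I ⊗ X)) = (N+n) Tr (S_n X)`.
Since `S_{n+1} (I ⊗ X) = S_{n+1} (I ⊗ S_n X)`, one may assume `X = Y` is symmetric. Every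
permutation of the `n+1` factors is a transposition of the new factor with some factor `p`
followed by a permutation of the old ones, which `Y` absorbs; so `(n+1)! Tr (S_{n+1} (I ⊗ Y))`
is `n!` times `Tr (I ⊗ Y) = N Tr Y` (for `p` the new factor itself) plus `n` copies of `Tr Y`
(a transposition glues the new factor's index to factor `p`'s). Iterating from
`Tr (S_M Γ) = Tr Γ` yields the ratio of factorials.
-/

lemma Matrix.trace_submatrix_equiv {m n R : Type*} [Fintype m] [Fintype n] [AddCommMonoid R]
    (e : m ≃ n) (A : Matrix n n R) : (A.submatrix e e).trace = A.trace :=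
  e.sum_comp fun j => A j j

namespace SymTensor

open Equiv

variable {K ι α β : Type*}

variable (ι) in
def relabel (d : α ≃ β) : (β → ι) ≃ (α → ι) := d.symm.arrowCongr (Equiv.refl ι)

@[simp] lemma relabel_apply (d : α ≃ β) (i : β → ι) : relabel ι d i = i ∘ d := rfl

lemma relabel_mul (σ τ : Perm α) : relabel ι (σ * τ) = relabel ι τ * relabel ι σ := rfl

lemma sum_optionArrow [Fintype ι] [Fintype α] [DecidableEq α] {M : Type*} [AddCommMonoid M]
    (g : ι → (α → ι) → M) : ∑ i : Option α → ι, g (i none) (i ∘ some) = ∑ a, ∑ x, g a x := by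
  rw [← Fintype.sum_prod_type']
  exact Fintype.sum_equiv piOptionEquivProd _ _ fun _ => rfl

variable [Field K] [DecidableEq ι]

variable (K ι α) in
def idTensor : Matrix (α → ι) (α → ι) K →ₗ[K] Matrix (Option α → ι) (Option α → ι) K where
  toFun X := Matrix.of fun i j => (1 : Matrix ι ι K) (i none) (j none) * X (i ∘ some) (j ∘ some)
  map_add' X Y := by ext; simp [mul_add]
  map_smul' c X := by ext; simp [mul_left_comm]

@[simp] lemma idTensor_apply (X : Matrix (α → ι) (α → ι) K) (i j : Option α → ι) :
    idTensor K ι α X i j = (1 : Matrix ι ι K) (i none) (j none) * X (i ∘ some) (j ∘ some) := rfl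

variable [Fintype α] [Fintype β]

variable (K ι) in
abbrev factorPerm (σ : Perm α) : Matrix (α → ι) (α → ι) K := Perm.permMatrix K (relabel ι σ)

lemma factorPerm_one : factorPerm K ι (1 : Perm α) = 1 :=
  Matrix.permMatrix_one

lemma factorPerm_submatrix_relabel (d : α ≃ β) (σ : Perm α) :
    (factorPerm K ι σ).submatrix (relabel ι d) (relabel ι d) = factorPerm K ι (d.permCongr σ) := by
  ext i j
  have hconj : relabel ι (d.permCongr σ) i = (relabel ι d).symm (relabel ι σ (relabel ι d i)) :=
    rfl
  simp only [Matrix.submatrix_apply, PEquiv.toMatrix_toPEquiv_apply, Pi.single_apply, hconj,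
    Equiv.eq_symm_apply]

variable [DecidableEq α] [DecidableEq β]

variable (K ι α) in
noncomputable def symmetrizer : Matrix (α → ι) (α → ι) K :=
  ((Fintype.card α).factorial : K)⁻¹ • ∑ σ : Perm α, factorPerm K ι σ

lemma symmetrizer_submatrix_relabel (d : α ≃ β) :
    (symmetrizer K ι α).submatrix (relabel ι d) (relabel ι d) = symmetrizer K ι β := by
  ext i j
  simp only [symmetrizer, Fintype.card_congr d, Matrix.submatrix_apply, Matrix.smul_apply,
    Matrix.sum_apply]
  congr 1
  exact Fintype.sum_equiv d.permCongr _ _ fun σ =>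
    congrFun (congrFun (factorPerm_submatrix_relabel d σ) i) j

variable [Fintype ι]

lemma factorPerm_mul (σ τ : Perm α) :
    factorPerm K ι (σ * τ) = factorPerm K ι σ * factorPerm K ι τ := by
  rw [factorPerm, relabel_mul, Matrix.permMatrix_mul]

lemma factorPerm_mul_apply (σ : Perm α) (A : Matrix (α → ι) (α → ι) K) (i j : α → ι) :
    (factorPerm K ι σ * A) i j = A (i ∘ σ) j := by
  rw [PEquiv.toMatrix_toPEquiv_mul]; rfl

lemma factorPerm_mul_symmetrizer (σ : Perm α) :
    factorPerm K ι σ * symmetrizer K ι α = symmetrizer K ι α := by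
  rw [symmetrizer, Matrix.mul_smul, Finset.mul_sum]
  congr 1
  exact Fintype.sum_equiv (Equiv.mulLeft σ) _ _ fun τ => (factorPerm_mul σ τ).symm

lemma symmetrizer_mul_factorPerm (σ : Perm α) :
    symmetrizer K ι α * factorPerm K ι σ = symmetrizer K ι α := by
  rw [symmetrizer, Matrix.smul_mul, Finset.sum_mul]
  congr 1
  exact Fintype.sum_equiv (Equiv.mulRight σ) _ _ fun τ => (factorPerm_mul τ σ).symm

lemma trace_symmetrizer_mul_submatrix_relabel (d : α ≃ β) (A : Matrix (α → ι) (α → ι) K) :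
    (symmetrizer K ι β * A.submatrix (relabel ι d) (relabel ι d)).trace =
      (symmetrizer K ι α * A).trace := by
  rw [← symmetrizer_submatrix_relabel d, Matrix.submatrix_mul_equiv,
    Matrix.trace_submatrix_equiv]

lemma trace_idTensor (X : Matrix (α → ι) (α → ι) K) :
    (idTensor K ι α X).trace = Fintype.card ι * X.trace := by
  simp only [Matrix.trace, Matrix.diag, idTensor_apply, Matrix.one_apply_eq, one_mul]
  rw [sum_optionArrow (fun _ x => X x x), Finset.sum_const, Finset.card_univ, nsmul_eq_mul]

lemma factorPerm_optionCongr_mul_idTensor (e : Perm α) (X : Matrix (α → ι) (α → ι) K) :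
    factorPerm K ι e.optionCongr * idTensor K ι α X = idTensor K ι α (factorPerm K ι e * X) := by
  ext i j
  simp only [factorPerm_mul_apply, idTensor_apply]
  rfl

lemma trace_factorPerm_swap_mul_idTensor (q : α) (X : Matrix (α → ι) (α → ι) K) :
    (factorPerm K ι (swap none (some q)) * idTensor K ι α X).trace = X.trace := by
  have hdiag (i : Option α → ι) :
      (factorPerm K ι (swap none (some q)) * idTensor K ι α X) i i =
        if (i ∘ some) q = i none then X (i ∘ some) (i ∘ some) else 0 := by
    change _ = if i (some q) = i none then _ else _
    rw [factorPerm_mul_apply, idTensor_apply, Function.comp_apply, swap_apply_left,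
      Matrix.one_apply]
    split_ifs with h
    · rw [comp_swap_eq_update, ← h, Function.update_eq_self, h, Function.update_eq_self, one_mul]
    · rw [zero_mul]
  simp only [Matrix.trace, Matrix.diag, hdiag]
  rw [sum_optionArrow (fun a x => if x q = a then X x x else 0), Finset.sum_comm]
  simp

lemma sum_trace_factorPerm_mul_idTensor (Y : Matrix (α → ι) (α → ι) K)
    (hY : symmetrizer K ι α * Y = Y) :
    ∑ σ : Perm (Option α), (factorPerm K ι σ * idTensor K ι α Y).trace =
      (Fintype.card α).factorial * (Fintype.card ι + Fintype.card α) * Y.trace := by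
  have hfix (e : Perm α) : factorPerm K ι e * Y = Y := by
    rw [← hY, ← Matrix.mul_assoc, factorPerm_mul_symmetrizer]
  have hdecomp (p : Option α) (e : Perm α) :
      factorPerm K ι (Perm.decomposeOption.symm (p, e)) * idTensor K ι α Y =
        factorPerm K ι (swap none p) * idTensor K ι α Y := by
    rw [Perm.decomposeOption_symm_apply, factorPerm_mul, Matrix.mul_assoc,
      factorPerm_optionCongr_mul_idTensor, hfix]
  rw [← Perm.decomposeOption.symm.sum_comp, Fintype.sum_prod_type]
  simp only [hdecomp, Finset.sum_const, Finset.card_univ, Fintype.card_perm, nsmul_eq_mul,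
    ← Finset.mul_sum, Fintype.sum_option, swap_self, Perm.one_def.symm]
  rw [factorPerm_one, Matrix.one_mul, trace_idTensor]
  simp only [trace_factorPerm_swap_mul_idTensor, Finset.sum_const, Finset.card_univ, nsmul_eq_mul]
  ring

variable [CharZero K]

lemma factorial_inv_smul_sum_const {V : Type*} [AddCommGroup V] [Module K V] (x : V) :
    ((Fintype.card α).factorial : K)⁻¹ • ∑ _σ : Perm α, x = x := by
  rw [Finset.sum_const, Finset.card_univ, Fintype.card_perm, ← Nat.cast_smul_eq_nsmul K,
    smul_smul, inv_mul_cancel₀ (by exact_mod_cast Nat.factorial_ne_zero _), one_smul]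

lemma symmetrizer_mul_self : symmetrizer K ι α * symmetrizer K ι α = symmetrizer K ι α :=
  calc _ = ((Fintype.card α).factorial : K)⁻¹ •
        ∑ σ : Perm α, factorPerm K ι σ * symmetrizer K ι α := by
        rw [← Finset.sum_mul, ← Matrix.smul_mul, symmetrizer]
    _ = _ := by
        simp_rw [factorPerm_mul_symmetrizer]
        exact factorial_inv_smul_sum_const _

lemma symmetrizer_mul_idTensor_symmetrizer_mul (X : Matrix (α → ι) (α → ι) K) :
    symmetrizer K ι (Option α) * idTensor K ι α (symmetrizer K ι α * X) =
      symmetrizer K ι (Option α) * idTensor K ι α X := by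
  rw [symmetrizer.eq_1 K ι α, Matrix.smul_mul, Finset.sum_mul, map_smul, map_sum, Matrix.mul_smul,
    Finset.mul_sum]
  simp_rw [← factorPerm_optionCongr_mul_idTensor, ← Matrix.mul_assoc, symmetrizer_mul_factorPerm]
  exact factorial_inv_smul_sum_const _

lemma trace_symmetrizer_mul_idTensor (X : Matrix (α → ι) (α → ι) K) :
    (Fintype.card α + 1) * (symmetrizer K ι (Option α) * idTensor K ι α X).trace =
      (Fintype.card ι + Fintype.card α) * (symmetrizer K ι α * X).trace := by
  rw [← symmetrizer_mul_idTensor_symmetrizer_mul, symmetrizer.eq_1 K ι (Option α),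
    Matrix.smul_mul, Matrix.trace_smul, Finset.sum_mul, Matrix.trace_sum,
    sum_trace_factorPerm_mul_idTensor _ (by rw [← Matrix.mul_assoc, symmetrizer_mul_self]),
    Fintype.card_option, Nat.factorial_succ, smul_eq_mul]
  have : ((Fintype.card α).factorial : K) ≠ 0 := Nat.cast_ne_zero.mpr (Nat.factorial_ne_zero _)
  push_cast
  field_simp

end SymTensor

namespace SymTensor

open Equiv

lemma permMat_eq_factorPerm (M N : ℕ) (σ : Perm (Fin M)) :
    permMat M N σ = factorPerm ℂ (Fin N) σ := by
  ext i j
  simp [permMat, eq_comm]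

lemma symProj_eq_symmetrizer (M N : ℕ) : symProj M N = symmetrizer ℂ (Fin N) (Fin M) := by
  simp only [symProj, symmetrizer, Fintype.card_fin, permMat_eq_factorPerm]

lemma extendOp_zero_submatrix (N M : ℕ) (Γ : Matrix (Fin M → Fin N) (Fin M → Fin N) ℂ) :
    (extendOp N M 0 Γ).submatrix (relabel (Fin N) (finCongr (zero_add M)))
      (relabel (Fin N) (finCongr (zero_add M))) = Γ := by
  ext i j
  simp [extendOp, funext_iff]

def splitFirst (k M : ℕ) : Fin (k + 1 + M) ≃ Option (Fin (k + M)) :=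
  (finCongr (Nat.add_right_comm k 1 M)).trans (finSuccEquiv (k + M))

lemma splitFirst_castAdd_zero (k M : ℕ) : splitFirst k M (Fin.castAdd M 0) = none := by
  rw [splitFirst, trans_apply, finCongr_apply, ← finSuccEquiv_zero (n := k + M)]
  rfl

lemma splitFirst_castAdd_succ (k M : ℕ) (a : Fin k) :
    splitFirst k M (Fin.castAdd M a.succ) = some (Fin.castAdd M a) := by
  rw [splitFirst, trans_apply, finCongr_apply,
    show Fin.cast _ (Fin.castAdd M a.succ) = (Fin.castAdd M a).succ from rfl, finSuccEquiv_succ]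

lemma splitFirst_natAdd (k M : ℕ) (b : Fin M) :
    splitFirst k M (Fin.natAdd (k + 1) b) = some (Fin.natAdd k b) := by
  rw [splitFirst, trans_apply, finCongr_apply,
    show Fin.cast _ (Fin.natAdd (k + 1) b) = (Fin.natAdd k b).succ from Fin.ext (by simp; omega),
    finSuccEquiv_succ]

lemma extendOp_succ_submatrix (N M k : ℕ) (Γ : Matrix (Fin M → Fin N) (Fin M → Fin N) ℂ) :
    (extendOp N M (k + 1) Γ).submatrix (relabel (Fin N) (splitFirst k M))
      (relabel (Fin N) (splitFirst k M)) = idTensor ℂ (Fin N) (Fin (k + M)) (extendOp N M k Γ) := by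
  ext i j
  simp only [extendOp, Matrix.submatrix_apply, Matrix.of_apply, relabel_apply, idTensor_apply,
    Function.comp_apply, splitFirst_natAdd, funext_iff, Fin.forall_fin_succ, splitFirst_castAdd_zero,
    splitFirst_castAdd_succ, Matrix.one_apply, ite_and]
  split_ifs <;> simp

lemma trace_symmetrizer_mul_extendOp_zero (N M : ℕ) (Γ : Matrix (Fin M → Fin N) (Fin M → Fin N) ℂ)
    (hΓ : symProj M N * Γ = Γ) :
    (symmetrizer ℂ (Fin N) (Fin (0 + M)) * extendOp N M 0 Γ).trace = Γ.trace := by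
  rw [← trace_symmetrizer_mul_submatrix_relabel (finCongr (zero_add M)), extendOp_zero_submatrix,
    ← symProj_eq_symmetrizer, hΓ]

lemma trace_symmetrizer_mul_extendOp_succ (N M k : ℕ)
    (Γ : Matrix (Fin M → Fin N) (Fin M → Fin N) ℂ) :
    (k + M + 1 : ℂ) * (symmetrizer ℂ (Fin N) (Fin (k + 1 + M)) * extendOp N M (k + 1) Γ).trace =
      (N + (k + M) : ℂ) * (symmetrizer ℂ (Fin N) (Fin (k + M)) * extendOp N M k Γ).trace := by
  rw [← trace_symmetrizer_mul_submatrix_relabel (splitFirst k M), extendOp_succ_submatrix]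
  simpa using trace_symmetrizer_mul_idTensor (extendOp N M k Γ)

lemma trace_symmetrizer_mul_extendOp (N M : ℕ) (hN : 1 ≤ N)
    (Γ : Matrix (Fin M → Fin N) (Fin M → Fin N) ℂ) (hΓ : symProj M N * Γ = Γ) (k : ℕ) :
    ((M + k).factorial : ℂ) * (M + N - 1).factorial *
        (symmetrizer ℂ (Fin N) (Fin (k + M)) * extendOp N M k Γ).trace =
      M.factorial * (M + k + N - 1).factorial * Γ.trace := by
  induction k with
  | zero => rw [trace_symmetrizer_mul_extendOp_zero N M Γ hΓ, Nat.add_zero]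
  | succ k ih =>
    have hfac : (M + k + 1 + N - 1).factorial = (M + k + N) * (M + k + N - 1).factorial := by
      rw [show M + k + 1 + N - 1 = M + k + N - 1 + 1 by omega, Nat.factorial_succ,
        show M + k + N - 1 + 1 = M + k + N by omega]
    rw [← Nat.add_assoc, Nat.factorial_succ, hfac]
    push_cast
    linear_combination ((M + k).factorial * (M + N - 1).factorial : ℂ) *
      trace_symmetrizer_mul_extendOp_succ N M k Γ + (N + (k + M) : ℂ) * ih

end SymTensor

open SymTensor

theorem trace_Tk_general (N M k : ℕ) (hN : 1 ≤ N)
    (Γ : Matrix (Fin M → Fin N) (Fin M → Fin N) ℂ)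
    (hΓ₁ : symProj M N * Γ = Γ) :
    (Tk N M k Γ).trace =
      (((M + k + N - 1).factorial : ℂ) / ((M + N - 1).factorial : ℂ)) * Γ.trace := by
  have hcyc : (Tk N M k Γ).trace = (M + k).factorial / M.factorial *
      (symmetrizer ℂ (Fin N) (Fin (k + M)) * extendOp N M k Γ).trace := by
    rw [Tk, Matrix.trace_smul, smul_eq_mul, symProj_eq_symmetrizer, Matrix.trace_mul_cycle,
      symmetrizer_mul_self]
  have hM : (M.factorial : ℂ) ≠ 0 := Nat.cast_ne_zero.mpr (Nat.factorial_ne_zero M)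
  have hMN : ((M + N - 1).factorial : ℂ) ≠ 0 := Nat.cast_ne_zero.mpr (Nat.factorial_ne_zero _)
  rw [hcyc]
  field_simp
  linear_combination trace_symmetrizer_mul_extendOp N M hN Γ hΓ₁ k

/-- `Tr_{H_{M+k}} T^k(Γ) = [(M+k+N-1)!/(M+N-1)!] ⋅ Tr_{H_M} Γ` for any
operator `Γ` on the symmetric subspace `H_M` (extended by zero, i.e. `P_M Γ = Γ = Γ P_M`). -/
theorem trace_Tk (N M k : ℕ) (hN : 1 ≤ N)
    (Γ : Matrix (Fin M → Fin N) (Fin M → Fin N) ℂ)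
    (hΓ₁ : symProj M N * Γ = Γ) (hΓ₂ : Γ * symProj M N = Γ) :
    (Tk N M k Γ).trace =
      (((M + k + N - 1).factorial : ℂ) / ((M + N - 1).factorial : ℂ)) * Γ.trace :=
  trace_Tk_general N M k hN Γ hΓ₁
end
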